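/- Let p > g ≥ 1, K a p-adic field, and π_1, …, π_g ∈ K with 0 < |π_i| ≤ |π_g| < 1 for all i. Set h(T) := ∏_{i=1}^g exp(∑_{k≥0} (π_i T^i)^{p^k}/p^k) and κ := (g, 0, 0, …). Then |S_κ(h(T))| = |π_g|, i.e. the coefficient of T^g in h(T) has absolute value exactly |π_g|. -/

import Mathlib

/-!
For `j < p` the coefficient `1/j!` of the Artin–Hasse exponential is a `p`-adic unit, so the
coefficient of `T^n` in `e^{AH}(π_i T^i)` (for `n ≤ g < p`) is either `0` or of norm
`‖π_i‖^(n/i)`. Pick `s` with `s^g < ‖π_g‖ ≤ s^(g-1)`. Every factor with `i < g` then has its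
`n`-th coefficient bounded by `s^n` up to degree `g`, a bound that survives products in an
ultrametric ring, while the last factor is `1 + π_g T^g + O(T^(g+1))`. So the coefficient of
`T^g` is `π_g` plus a term of norm at most `s^g < ‖π_g‖`.
-/

open scoped Classical

/-- `∑_{k≥0} T^{p^k - 1}`: the Artin–Hasse exponential `e^{AH}` is the unique
power series `F` with `F(0) = 1` and `F' = (∑_k T^{p^k-1})·F`, i.e.
`F = exp (∑_k T^{p^k}/p^k)`. -/
noncomputable def ahLogDeriv (p : ℕ) : PowerSeries ℚ :=
  PowerSeries.mk fun n => if ∃ k : ℕ, n + 1 = p ^ k then (1 : ℚ) else 0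

/-- The substitution `e^{AH}(π T^d)` as a power series over `K`, where `AH`
has rational coefficients `a_m`:  its `n`-th coefficient is `a_{n/d} π^{n/d}`
if `d ∣ n` and `0` otherwise. -/
noncomputable def ahSubst (AH : PowerSeries ℚ) {K : Type*} [Field K] [CharZero K]
    (π : K) (d : ℕ) : PowerSeries K :=
  PowerSeries.mk fun n =>
    if d ∣ n then ((PowerSeries.coeff (n / d) AH : ℚ) : K) * π ^ (n / d) else 0

namespace PowerSeries

lemma coeff_mul_of_coeff_eq_zero_of_pos_of_lt {R : Type*} [CommSemiring R] {f g : R⟦X⟧}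
    {n : ℕ} (hn : 0 < n) (hg : ∀ j, 0 < j → j < n → coeff j g = 0) :
    coeff n (f * g) = coeff n f * constantCoeff g + constantCoeff f * coeff n g := by
  rw [coeff_mul, Finset.sum_eq_add (n, 0) (0, n) (by simp; omega)]
  · simp
  · rintro ⟨i, j⟩ hij ⟨hi, hj⟩
    rw [Finset.HasAntidiagonal.mem_antidiagonal] at hij
    rw [hg j (by grind) (by grind), mul_zero]
  all_goals simp

variable {R : Type*} [NormedCommRing R] [IsUltrametricDist R] {s : ℝ} {N : ℕ}

lemma norm_coeff_mul_le_pow (hs : 0 ≤ s) {f g : R⟦X⟧} (hf : ∀ n ≤ N, ‖coeff n f‖ ≤ s ^ n)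
    (hg : ∀ n ≤ N, ‖coeff n g‖ ≤ s ^ n) : ∀ n ≤ N, ‖coeff n (f * g)‖ ≤ s ^ n := by
  intro n hn
  rw [coeff_mul]
  refine IsUltrametricDist.norm_sum_le_of_forall_le_of_nonneg (pow_nonneg hs n) ?_
  rintro ⟨i, j⟩ hij
  rw [Finset.HasAntidiagonal.mem_antidiagonal] at hij
  calc ‖coeff i f * coeff j g‖ ≤ ‖coeff i f‖ * ‖coeff j g‖ := norm_mul_le _ _
    _ ≤ s ^ i * s ^ j := by
      gcongr
      exacts [hf i (by omega), hg j (by omega)]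
    _ = s ^ n := by rw [← pow_add, hij]

lemma norm_coeff_prod_le_pow [NormOneClass R] (hs : 0 ≤ s) {ι : Type*} (t : Finset ι)
    (f : ι → R⟦X⟧) (hf : ∀ i ∈ t, ∀ n ≤ N, ‖coeff n (f i)‖ ≤ s ^ n) :
    ∀ n ≤ N, ‖coeff n (∏ i ∈ t, f i)‖ ≤ s ^ n :=
  Finset.prod_induction f (fun F => ∀ n ≤ N, ‖coeff n F‖ ≤ s ^ n)
    (fun _ _ => norm_coeff_mul_le_pow hs)
    (fun n _ => by rcases n with _ | n <;> simp [coeff_one, pow_nonneg hs]) hf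

end PowerSeries

lemma exists_pow_succ_lt_le_pow {ρ : ℝ} (hρ0 : 0 < ρ) (hρ1 : ρ < 1) (m : ℕ) :
    ∃ s : ℝ, 0 ≤ s ∧ s ^ (m + 1) < ρ ∧ ∀ d ≤ m, ρ ≤ s ^ d := by
  -- any root `ρ ^ (1 / e)` with `m < e < m + 1` will do
  refine ⟨ρ ^ ((m + 2⁻¹ : ℝ)⁻¹), by positivity, ?_, fun d hd => ?_⟩
  · rw [← Real.rpow_natCast, ← Real.rpow_mul hρ0.le]
    conv_rhs => rw [← Real.rpow_one ρ]
    refine Real.rpow_lt_rpow_of_exponent_gt hρ0 hρ1 ?_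
    rw [← div_eq_inv_mul, one_lt_div (by positivity)]
    push_cast; linarith
  · rw [← Real.rpow_natCast, ← Real.rpow_mul hρ0.le]
    conv_lhs => rw [← Real.rpow_one ρ]
    refine Real.rpow_le_rpow_of_exponent_ge hρ0 hρ1.le ?_
    rw [← div_eq_inv_mul, div_le_one (by positivity)]
    have : (d : ℝ) ≤ m := by exact_mod_cast hd
    linarith

section ArtinHasse

open PowerSeries

variable {p : ℕ} {AH : PowerSeries ℚ}

lemma coeff_ahLogDeriv_mul_of_lt (F : PowerSeries ℚ) {n : ℕ} (hn : n + 1 < p) :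
    coeff n (ahLogDeriv p * F) = coeff n F := by
  rw [coeff_mul, Finset.sum_eq_single (0, n)]
  · have hone : ∃ k : ℕ, 0 + 1 = p ^ k := ⟨0, (pow_zero p).symm⟩
    simp [ahLogDeriv, hone]
  · rintro ⟨a, b⟩ hab hne
    rw [Finset.HasAntidiagonal.mem_antidiagonal] at hab
    -- `1 < a + 1 < p`, so `a + 1` is not a power of `p`
    have hpow : ¬ ∃ k : ℕ, a + 1 = p ^ k := by
      rintro ⟨_ | k, hk⟩
      · grind
      · have := Nat.le_self_pow (n := k + 1) k.succ_ne_zero p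
        omega
    simp [ahLogDeriv, hpow]
  · simp

lemma coeff_eq_inv_factorial_of_lt (hAH0 : constantCoeff AH = 1)
    (hAHd : derivative ℚ AH = ahLogDeriv p * AH) {m : ℕ} (hm : m < p) :
    coeff m AH = (m.factorial : ℚ)⁻¹ := by
  induction m with
  | zero => simpa using hAH0
  | succ n ih =>
    have hrec : coeff (n + 1) AH * (n + 1) = (n.factorial : ℚ)⁻¹ := by
      rw [← coeff_derivative, hAHd, coeff_ahLogDeriv_mul_of_lt AH hm, ih (by omega)]
    rw [Nat.factorial_succ, Nat.cast_mul, mul_inv, ← hrec]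
    push_cast
    field_simp

variable {K : Type*} [NormedField K]

lemma norm_coeff_eq_one_of_lt (hp : p.Prime) (hnorm : ∀ q : ℚ, ‖(q : K)‖ = (padicNorm p q : ℝ))
    (hAH0 : constantCoeff AH = 1) (hAHd : derivative ℚ AH = ahLogDeriv p * AH) {m : ℕ}
    (hm : m < p) : ‖((coeff m AH : ℚ) : K)‖ = 1 := by
  have : Fact p.Prime := ⟨hp⟩
  have hfac : padicNorm p (m.factorial : ℚ) = 1 :=
    (padicNorm.nat_eq_one_iff _).mpr fun h => by
      have := (hp.dvd_factorial).mp h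
      omega
  rw [coeff_eq_inv_factorial_of_lt hAH0 hAHd hm, hnorm, inv_eq_one_div,
    padicNorm.div, padicNorm.one, hfac]
  norm_num

variable [CharZero K]

lemma coeff_ahSubst_of_not_dvd (π : K) {d n : ℕ} (h : ¬ d ∣ n) :
    coeff n (ahSubst AH π d) = 0 := by
  simp [ahSubst, h]

lemma coeff_ahSubst_mul (π : K) {d : ℕ} (hd : 0 < d) (j : ℕ) :
    coeff (d * j) (ahSubst AH π d) = ((coeff j AH : ℚ) : K) * π ^ j := by
  simp [ahSubst, Nat.mul_div_cancel_left j hd]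

lemma constantCoeff_ahSubst (π : K) (d : ℕ) :
    constantCoeff (ahSubst AH π d) = ((constantCoeff AH : ℚ) : K) := by
  rw [← coeff_zero_eq_constantCoeff_apply, ← coeff_zero_eq_constantCoeff_apply]
  simp [ahSubst]

lemma norm_coeff_ahSubst_le_pow (hp : p.Prime)
    (hnorm : ∀ q : ℚ, ‖(q : K)‖ = (padicNorm p q : ℝ)) (hAH0 : constantCoeff AH = 1)
    (hAHd : derivative ℚ AH = ahLogDeriv p * AH) {π : K} {d n : ℕ} {s : ℝ} (hd : 0 < d)
    (hs : 0 ≤ s) (hπ : ‖π‖ ≤ s ^ d) (hn : n < p) : ‖coeff n (ahSubst AH π d)‖ ≤ s ^ n := by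
  by_cases hdn : d ∣ n
  · obtain ⟨j, rfl⟩ := hdn
    have hj : j < p := lt_of_le_of_lt (Nat.le_mul_of_pos_left j hd) hn
    rw [coeff_ahSubst_mul π hd, norm_mul, norm_coeff_eq_one_of_lt hp hnorm hAH0 hAHd hj,
      one_mul, norm_pow, pow_mul]
    exact pow_le_pow_left₀ (norm_nonneg π) hπ j
  · rw [coeff_ahSubst_of_not_dvd π hdn, norm_zero]
    positivity

end ArtinHasse

/-- Let `p > g ≥ 1`, `K` a `p`-adic field (ultrametric
normed, norm extending the `p`-adic norm of `ℚ`), and `π_1, …, π_g ∈ K` with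
`0 < |π_i| ≤ |π_g| < 1`.  Set
`h(T) = ∏_{i=1}^g e^{AH}(π_i T^i) = ∏_{i=1}^g exp (∑_{k≥0} (π_i T^i)^{p^k}/p^k)`.
Then the coefficient of `T^g` in `h(T)` (that is, `S_{(g)}(h)`) has norm
exactly `|π_g|`. -/
theorem coeff_g_of_product_norm
    (p g : ℕ) (hp : p.Prime) (hg : 0 < g) (hgp : g < p)
    (K : Type*) [NormedField K] [IsUltrametricDist K] [CharZero K]
    (hnorm : ∀ q : ℚ, ‖(q : K)‖ = (padicNorm p q : ℝ))
    (AH : PowerSeries ℚ)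
    (hAH0 : PowerSeries.constantCoeff AH = 1)
    (hAHd : PowerSeries.derivative ℚ AH = ahLogDeriv p * AH)
    (π : Fin g → K)
    (hπ0 : ∀ i, 0 < ‖π i‖)
    (hπle : ∀ i, ‖π i‖ ≤ ‖π ⟨g - 1, by omega⟩‖)
    (hπ1 : ‖π ⟨g - 1, by omega⟩‖ < 1) :
    ‖PowerSeries.coeff (R := K) g (∏ i : Fin g, ahSubst AH (π i) ((i : ℕ) + 1))‖ =
      ‖π ⟨g - 1, by omega⟩‖ := by
  set last : Fin g := ⟨g - 1, by omega⟩
  have hlast : (last : ℕ) + 1 = g := by simp only [last]; omega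
  obtain ⟨s, hs, hsg, hρs⟩ := exists_pow_succ_lt_le_pow (hπ0 last) hπ1 (g - 1)
  rw [Nat.sub_add_cancel hg] at hsg
  have hrest : ‖PowerSeries.coeff g (∏ i ∈ Finset.univ.erase last,
      ahSubst AH (π i) ((i : ℕ) + 1))‖ ≤ s ^ g := by
    refine PowerSeries.norm_coeff_prod_le_pow hs _ _ (fun i hi n hn => ?_) g le_rfl
    have hi : (i : ℕ) + 1 ≤ g - 1 := by
      have := Fin.val_ne_of_ne (Finset.ne_of_mem_erase hi)
      simp only [last] at this; omega
    exact norm_coeff_ahSubst_le_pow hp hnorm hAH0 hAHd i.succ_pos hs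
      ((hπle i).trans (hρs _ hi)) (by omega)
  have hconst : PowerSeries.constantCoeff (∏ i ∈ Finset.univ.erase last,
      ahSubst AH (π i) ((i : ℕ) + 1)) = 1 := by
    simp [map_prod, constantCoeff_ahSubst, hAH0]
  have hleading : PowerSeries.coeff g (ahSubst AH (π last) g) = π last := by
    simpa [coeff_eq_inv_factorial_of_lt hAH0 hAHd hp.one_lt] using
      coeff_ahSubst_mul (AH := AH) (π last) hg 1
  rw [← Finset.prod_erase_mul _ _ (Finset.mem_univ last), hlast,
    PowerSeries.coeff_mul_of_coeff_eq_zero_of_pos_of_lt hg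
      (fun j hj hjg => coeff_ahSubst_of_not_dvd _ (Nat.not_dvd_of_pos_of_lt hj hjg)),
    hconst, constantCoeff_ahSubst, hAH0, hleading, Rat.cast_one, mul_one, one_mul,
    IsUltrametricDist.norm_add_eq_max_of_norm_ne_norm (hrest.trans_lt hsg).ne,
    max_eq_right (hrest.trans_lt hsg).le]
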